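/- arXiv:1110.6869 — 2 statements merged into one kernel-verified Lean document; each statement's English description precedes it below -/
import Mathlib

section
/- Every admissible function u on (0,π) satisfying ℓ_ε[u] = 0 almost everywhere is of the form u = αψ + β for some constants α, β ∈ ℂ, where ψ = f/p. -/
open MeasureTheory Set Real Filter Topology Asymptotics intervalIntegral

noncomputable section

/-- The punctured double interval `(-π,0) ∪ (0,π)`. -/
def Ipm : Set ℝ := Ioo (-π) 0 ∪ Ioo 0 π

/-- `u` is locally absolutely continuous on `s`: on every compact subinterval of `s`,
`u` is the indefinite integral of a (locally) integrable function. -/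
def ACLocOn {E : Type*} [NormedAddCommGroup E] [NormedSpace ℝ E] [CompleteSpace E]
    (u : ℝ → E) (s : Set ℝ) : Prop :=
  ∀ a b : ℝ, a < b → Icc a b ⊆ s →
    ∃ g : ℝ → E, IntervalIntegrable g volume a b ∧
      ∀ x ∈ Icc a b, u x = u a + ∫ t in a..x, g t

/-- Standing hypotheses (1)-(4) on the coefficient `f`, together with `0 < ε < 2/c`,
where `c = f'(0)` and `f(x) = c·x + O(|x|^(1+δ))` near `0`. -/
structure StandingHyp (ε c δ : ℝ) (f : ℝ → ℝ) : Prop where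
  per : ∀ x, f (x + 2 * π) = f x
  ac : ACLocOn f univ
  diff : ∃ S : Finset ℝ, (∀ x, x ∉ S → DifferentiableAt ℝ f x) ∧ ∀ n : ℤ, (n : ℝ) * π ∉ S
  deriv0 : HasDerivAt f c 0
  cne : c ≠ 0
  δpos : 0 < δ
  near0 : (fun x => f x - c * x) =O[𝓝 (0 : ℝ)] fun x => |x| ^ (1 + δ)
  anti : ∀ x, f (x + π) = -f x
  odd : ∀ x, f (-x) = -f x
  pos : ∀ x ∈ Ioo 0 π, 0 < f x
  εpos : 0 < ε
  εlt : ε < 2 / c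

/-- `p` is an integrating factor: nonvanishing and locally absolutely continuous on
`(-π,0) ∪ (0,π)` with `p'/p = f'/f + 1/(ε f)` a.e. there. -/
structure IsIntegratingFactor (ε : ℝ) (f p : ℝ → ℝ) : Prop where
  ne : ∀ x ∈ Ipm, p x ≠ 0
  ac : ACLocOn p Ipm
  ode : ∀ᵐ x ∂(volume : Measure ℝ), x ∈ Ipm →
    HasDerivAt p (p x * (deriv f x / f x + 1 / (ε * f x))) x

/-- `u` is admissible on `s`, with a.e. derivative `u'`: both `u` and `f·u' + u` are
locally absolutely continuous on `s`. -/
structure AdmissibleOn (f : ℝ → ℝ) (u u' : ℝ → ℂ) (s : Set ℝ) : Prop where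
  ac : ACLocOn u s
  hu' : ∀ᵐ x ∂(volume : Measure ℝ), x ∈ s → HasDerivAt u (u' x) x
  acf : ACLocOn (fun x => (f x : ℂ) * u' x + u x) s

/-- `ℓ_ε[u] = ε (f u')' + u' = F` holds a.e. on `s` (`u'` being the derivative of `u`). -/
def EllEq (ε : ℝ) (f : ℝ → ℝ) (u u' F : ℝ → ℂ) (s : Set ℝ) : Prop :=
  ∃ w' : ℝ → ℂ,
    (∀ᵐ x ∂(volume : Measure ℝ), x ∈ s → HasDerivAt (fun y => (f y : ℂ) * u' y) (w' x) x) ∧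
    (∀ᵐ x ∂(volume : Measure ℝ), x ∈ s → (ε : ℂ) * w' x + u' x = F x)

/-- Lebesgue measure on `(-π,π)`. -/
def μπ : Measure ℝ := volume.restrict (Ioo (-π) π)

instance : IsFiniteMeasure μπ := by
  constructor
  rw [μπ, Measure.restrict_apply_univ, Real.volume_Ioo]
  exact ENNReal.ofReal_lt_top

/-- `u ∈ Dom(L_ε)` and `L_ε u = F`: `u, F ∈ L²(-π,π)`, `u` is admissible with
`ℓ_ε[u] = F` a.e., `u` is absolutely continuous on all of `(-π,π)`, and
`lim_{x→π⁻} u(x) = lim_{x→-π⁺} u(x)`. -/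
structure InDomWith (ε : ℝ) (f : ℝ → ℝ) (u F : ℝ → ℂ) : Prop where
  uL2 : MemLp u 2 μπ
  FL2 : MemLp F 2 μπ
  sol : ∃ u', AdmissibleOn f u u' Ipm ∧ EllEq ε f u u' F Ipm
  acu : ACLocOn u (Ioo (-π) π)
  bc : ∃ L : ℂ, Tendsto u (𝓝[<] π) (𝓝 L) ∧ Tendsto u (𝓝[>] (-π)) (𝓝 L)

/-- The function `ψ = f/p`, as a complex-valued function. -/
def psiC (f p : ℝ → ℝ) : ℝ → ℂ := fun x => ((f x / p x : ℝ) : ℂ)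

/-- The Green's kernel `G(x,y)`. -/
def greenK (ψ : ℝ → ℝ) (x y : ℝ) : ℝ :=
  if 0 < y ∧ y < x ∧ x < π then 1 - ψ x / ψ y
  else if -π < x ∧ x < y ∧ y < 0 then -(1 - ψ x / ψ y)
  else 0

/-- The `n`-th approximation number of a bounded operator: the distance from `S` to the
operators of rank `< n` (for `n ≥ 1` these are the singular values of `S`). -/
noncomputable def approxNum {E F : Type*} [NormedAddCommGroup E] [NormedSpace ℂ E]
    [NormedAddCommGroup F] [NormedSpace ℂ F] (S : E →L[ℂ] F) (n : ℕ) : ℝ :=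
  sInf {r | ∃ A : E →L[ℂ] F,
    Module.rank ℂ (LinearMap.range (A : E →ₗ[ℂ] F)) < (n : Cardinal) ∧ r = ‖S - A‖}

/-- Membership in the Schatten class `C_q`: the singular values `s_n(S)`, `n ≥ 1`,
are `q`-summable. -/
def MemSchatten {E F : Type*} [NormedAddCommGroup E] [NormedSpace ℂ E]
    [NormedAddCommGroup F] [NormedSpace ℂ F] (q : ℝ) (S : E →L[ℂ] F) : Prop :=
  Summable fun n : ℕ => approxNum S (n + 1) ^ q

/-!
Integrating `ε (f u')' + u' = 0` once gives the first integral `ε f u' + u = K`. The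
integrating-factor equation `p'/p = f'/f + 1/(ε f)` gives `(p/f)' = p/(ε f²)`, hence
`((p/f)(u - K))' = p/(ε f²) · (ε f u' + u - K) = 0` a.e. Both functions whose derivatives vanish
are absolutely continuous on compact subintervals, so they are constant, and `u = α ψ + K`.
-/
namespace AbsolutelyContinuousOnInterval

theorem of_dist_le_mul {X Y : Type*} [PseudoMetricSpace X] [PseudoMetricSpace Y]
    {f : ℝ → X} {g : ℝ → Y} {a b : ℝ} (K : ℝ)
    (hg : AbsolutelyContinuousOnInterval g a b)
    (hfg : ∀ x ∈ uIcc a b, ∀ y ∈ uIcc a b, dist (f x) (f y) ≤ K * dist (g x) (g y)) :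
    AbsolutelyContinuousOnInterval f a b := by
  have hK : Tendsto (fun E : ℕ × (ℕ → ℝ × ℝ) =>
      K * ∑ i ∈ Finset.range E.1, dist (g (E.2 i).1) (g (E.2 i).2))
      (totalLengthFilter ⊓ 𝓟 (disjWithin a b)) (𝓝 0) := by
    simpa using Tendsto.const_mul K hg
  refine squeeze_zero' (Eventually.of_forall fun E => Finset.sum_nonneg fun i _ => dist_nonneg)
    ?_ hK
  filter_upwards [eventually_inf_principal.mpr (Eventually.of_forall fun E hE => hE)] with E hE
  rw [Finset.mul_sum]
  exact Finset.sum_le_sum fun i hi => hfg _ (hE.1 i hi).1 _ (hE.1 i hi).2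

theorem sub_const {E : Type*} [SeminormedAddCommGroup E] {f : ℝ → E} {a b : ℝ}
    (hf : AbsolutelyContinuousOnInterval f a b) (c : E) :
    AbsolutelyContinuousOnInterval (fun x => f x - c) a b :=
  of_dist_le_mul 1 hf fun x _ y _ => by rw [dist_sub_right, one_mul]

end AbsolutelyContinuousOnInterval

-- The real-valued case is in Mathlib; `‖∫ g‖ ≤ |∫ ‖g‖|` reduces the general one to it.
theorem IntervalIntegrable.absolutelyContinuousOnInterval_intervalIntegral'
    {E : Type*} [NormedAddCommGroup E] [NormedSpace ℝ E] [CompleteSpace E]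
    {g : ℝ → E} {a b c : ℝ} (hg : IntervalIntegrable g volume a b) (hc : c ∈ uIcc a b) :
    AbsolutelyContinuousOnInterval (fun x => ∫ t in c..x, g t) a b := by
  refine .of_dist_le_mul 1 (hg.norm.absolutelyContinuousOnInterval_intervalIntegral hc)
    fun x hx y hy => ?_
  have hI : ∀ {d e}, d ∈ uIcc a b → e ∈ uIcc a b → IntervalIntegrable g volume d e :=
    fun hd he => hg.mono_set (uIcc_subset_uIcc hd he)
  have hIn : ∀ {d e}, d ∈ uIcc a b → e ∈ uIcc a b →
      IntervalIntegrable (fun t => ‖g t‖) volume d e := fun hd he => (hI hd he).norm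
  rw [one_mul, dist_eq_norm, Real.dist_eq, integral_interval_sub_left (hI hc hx) (hI hc hy),
    integral_interval_sub_left (hIn hc hx) (hIn hc hy)]
  exact norm_integral_le_abs_integral_norm

theorem ACLocOn.mono {E : Type*} [NormedAddCommGroup E] [NormedSpace ℝ E] [CompleteSpace E]
    {u : ℝ → E} {s t : Set ℝ} (hu : ACLocOn u s) (hts : t ⊆ s) : ACLocOn u t :=
  fun a b hab habt => hu a b hab (habt.trans hts)

theorem ACLocOn.absolutelyContinuousOnInterval
    {E : Type*} [NormedAddCommGroup E] [NormedSpace ℝ E] [CompleteSpace E]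
    {u : ℝ → E} {s : Set ℝ} {a b : ℝ} (hu : ACLocOn u s) (hab : uIcc a b ⊆ s) :
    AbsolutelyContinuousOnInterval u a b := by
  wlog hle : a ≤ b generalizing a b
  · exact (this (uIcc_comm a b ▸ hab) (le_of_not_ge hle)).symm
  rcases hle.eq_or_lt with rfl | hlt
  · have hid := (LipschitzWith.id.lipschitzOnWith (s := uIcc a a)).absolutelyContinuousOnInterval
    refine .of_dist_le_mul 0 hid fun x hx y hy => ?_
    simp_all
  obtain ⟨g, hg, hrep⟩ := hu a b hlt (uIcc_of_le hle ▸ hab)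
  refine .of_dist_le_mul 1 (hg.absolutelyContinuousOnInterval_intervalIntegral' left_mem_uIcc)
    fun x hx y hy => ?_
  rw [uIcc_of_le hle] at hx hy
  rw [hrep x hx, hrep y hy, dist_add_left, one_mul]

theorem AbsolutelyContinuousOnInterval.inv {f : ℝ → ℝ} {a b : ℝ}
    (hf : AbsolutelyContinuousOnInterval f a b) (hf0 : ∀ x ∈ uIcc a b, f x ≠ 0) :
    AbsolutelyContinuousOnInterval f⁻¹ a b := by
  obtain ⟨z, hz, hmin⟩ := isCompact_uIcc.exists_isMinOn nonempty_uIcc hf.continuousOn.abs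
  have hm : 0 < |f z| := abs_pos.2 (hf0 z hz)
  refine .of_dist_le_mul (|f z| ^ 2)⁻¹ hf fun x hx y hy => ?_
  have hx' : |f z| ≤ |f x| := hmin hx
  have hy' : |f z| ≤ |f y| := hmin hy
  rw [Pi.inv_apply, Pi.inv_apply, Real.dist_eq, Real.dist_eq, inv_sub_inv (hf0 x hx) (hf0 y hy),
    abs_div, abs_mul, abs_sub_comm, div_eq_inv_mul, sq]
  gcongr

theorem Set.OrdConnected.eq_of_ae_hasDerivAt_zero
    {E : Type*} [NormedAddCommGroup E] [NormedSpace ℝ E]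
    {F : ℝ → E} {s : Set ℝ} (hs : s.OrdConnected)
    (hF : ∀ a ∈ s, ∀ b ∈ s, AbsolutelyContinuousOnInterval F a b)
    (hF' : ∀ᵐ x, x ∈ s → HasDerivAt F 0 x) {x y : ℝ} (hx : x ∈ s) (hy : y ∈ s) :
    F x = F y := by
  obtain ⟨C, hC⟩ := (hF x hx y hy).const_of_ae_hasDerivAt_zero <| by
    filter_upwards [hF'] with z hz hzs using hz (hs.uIcc_subset hx hy hzs)
  rw [hC x left_mem_uIcc, hC y right_mem_uIcc]

theorem EllEq.first_integral {ε : ℝ} {f : ℝ → ℝ} {u u' : ℝ → ℂ} {s : Set ℝ}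
    (hs : s.OrdConnected) (hu : AdmissibleOn f u u' s) (heq : EllEq ε f u u' (fun _ => 0) s)
    {x y : ℝ} (hx : x ∈ s) (hy : y ∈ s) :
    ε * (f x * u' x) + u x = ε * (f y * u' y) + u y := by
  obtain ⟨w', hw', hw'eq⟩ := heq
  -- `ε f u' + u`, as a combination of the two absolutely continuous functions of admissibility
  set G : ℝ → ℂ := fun z => (ε : ℂ) • ((f z : ℂ) * u' z + u z) + (1 - ε : ℂ) • u z
  have hG : ∀ a ∈ s, ∀ b ∈ s, AbsolutelyContinuousOnInterval G a b := fun a ha b hb =>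
    ((hu.acf.absolutelyContinuousOnInterval (hs.uIcc_subset ha hb)).const_smul _).add
      ((hu.ac.absolutelyContinuousOnInterval (hs.uIcc_subset ha hb)).const_smul _)
  have hG' : ∀ᵐ z, z ∈ s → HasDerivAt G 0 z := by
    filter_upwards [hu.hu', hw', hw'eq] with z hu'z hw'z hz hzs
    refine ((((hw'z hzs).add (hu'z hzs)).const_smul (ε : ℂ)).add
      ((hu'z hzs).const_smul (1 - ε : ℂ)) : HasDerivAt G _ z).congr_deriv ?_
    simp only [smul_eq_mul]
    linear_combination hz hzs
  have := hs.eq_of_ae_hasDerivAt_zero hG hG' hx hy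
  simp only [G, smul_eq_mul] at this
  linear_combination this

theorem IsIntegratingFactor.smul_sub_eq_of_first_integral {ε : ℝ} {f p : ℝ → ℝ}
    {u u' : ℝ → ℂ} {s : Set ℝ} {K : ℂ} (hp : IsIntegratingFactor ε f p) (hε : ε ≠ 0)
    (hs : s.OrdConnected) (hsIpm : s ⊆ Ipm) (hfac : ACLocOn f s)
    (hfd : ∀ᵐ x, x ∈ s → DifferentiableAt ℝ f x) (hf0 : ∀ x ∈ s, f x ≠ 0)
    (hu : AdmissibleOn f u u' s) (hK : ∀ x ∈ s, ε * (f x * u' x) + u x = K)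
    {x y : ℝ} (hx : x ∈ s) (hy : y ∈ s) :
    (p x / f x) • (u x - K) = (p y / f y) • (u y - K) := by
  set Z : ℝ → ℂ := fun z => (p z / f z) • (u z - K)
  have hZ : ∀ a ∈ s, ∀ b ∈ s, AbsolutelyContinuousOnInterval Z a b := by
    intro a ha b hb
    have hab := hs.uIcc_subset ha hb
    have hq := (hp.ac.absolutelyContinuousOnInterval (hab.trans hsIpm)).mul
      ((hfac.absolutelyContinuousOnInterval hab).inv fun z hz => hf0 z (hab hz))
    exact hq.smul ((hu.ac.absolutelyContinuousOnInterval hab).sub_const K)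
  have hZ' : ∀ᵐ z, z ∈ s → HasDerivAt Z 0 z := by
    filter_upwards [hp.ode, hfd, hu.hu'] with z hpz hfz huz hzs
    have hfz0 := hf0 z hzs
    refine (((hpz (hsIpm hzs)).div (hfz hzs).hasDerivAt hfz0).smul
      ((huz hzs).sub_const K) : HasDerivAt Z _ z).congr_deriv ?_
    have hfz0C : (f z : ℂ) ≠ 0 := Complex.ofReal_ne_zero.2 hfz0
    have hεC : (ε : ℂ) ≠ 0 := Complex.ofReal_ne_zero.2 hε
    have hKz := hK z hzs
    simp only [Complex.real_smul, Pi.div_apply]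
    push_cast
    field_simp
    linear_combination (p z : ℂ) * hKz
  exact hs.eq_of_ae_hasDerivAt_zero hZ hZ' hx hy

/-- every admissible solution `u` of `ℓ_ε[u] = 0` (a.e.) on `(0,π)` has the
form `u = α ψ + β` with `ψ = f/p`. -/
theorem stmt3 (ε c δ : ℝ) (f p : ℝ → ℝ)
    (hf : StandingHyp ε c δ f) (hp : IsIntegratingFactor ε f p)
    (u u' : ℝ → ℂ) (hu : AdmissibleOn f u u' (Ioo 0 π))
    (heq : EllEq ε f u u' (fun _ => 0) (Ioo 0 π)) :
    ∃ α β : ℂ, ∀ x ∈ Ioo 0 π, u x = α * psiC f p x + β := by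
  have hx₀ : π / 2 ∈ Ioo 0 π := ⟨by positivity, by linarith [pi_pos]⟩
  set K : ℂ := ε * (f (π / 2) * u' (π / 2)) + u (π / 2)
  have hK : ∀ x ∈ Ioo 0 π, ε * (f x * u' x) + u x = K := fun x hx =>
    heq.first_integral ordConnected_Ioo hu hx hx₀
  have hfd : ∀ᵐ x, x ∈ Ioo 0 π → DifferentiableAt ℝ f x := by
    obtain ⟨S, hS, -⟩ := hf.diff
    filter_upwards [S.finite_toSet.countable.ae_notMem volume] with x hx _ using hS x hx
  refine ⟨(p (π / 2) / f (π / 2)) • (u (π / 2) - K), K, fun x hx => ?_⟩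
  have hZ := hp.smul_sub_eq_of_first_integral hf.εpos.ne' ordConnected_Ioo
    (fun _ => Or.inr) (hf.ac.mono (subset_univ _)) hfd
    (fun y hy => (hf.pos y hy).ne') hu hK hx hx₀
  have hpx : (p x : ℂ) ≠ 0 := Complex.ofReal_ne_zero.2 (hp.ne x (Or.inr hx))
  have hfx : (f x : ℂ) ≠ 0 := Complex.ofReal_ne_zero.2 (hf.pos x hx).ne'
  rw [← hZ, psiC, Complex.real_smul]
  push_cast
  field_simp
  ring
end
end

section
/- Let M : Dom(M) → H be a closed operator on an infinite-dimensional Hilbert space H with compact resolvent, with eigenvalues μ_n ∈ ℂ and corresponding eigenvectors φ_n ≠ 0, Mφ_n = μ_n φ_n. Suppose {φ_n}_{n=1}^∞ is a conditional (Schauder) basis of H with biorthogonal system {φ_n*} (⟨φ_n, φ_m*⟩ = δ_{nm}, and ‖g - Σ_{n=1}^k ⟨g, φ_n*⟩ φ_n‖ → 0 as k → ∞ for every g ∈ H). Then Dom(M) = { g ∈ H : the partial sums Σ_{n=1}^k μ_n ⟨g, φ_n*⟩ φ_n converge in H as k → ∞ }, and for every g ∈ Dom(M), Mg = lim_{k→∞}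 Σ_{n=1}^k μ_n ⟨g, φ_n*⟩ φ_n. -/
/-!
The resolvent `R = (M - μ)⁻¹` is continuous and acts diagonally on the basis,
`R φ_n = (μ_n - μ)⁻¹ φ_n`, so applying `R` to a basis expansion and reading off the coefficients
gives `⟨R h, φ_n*⟩ = (μ_n - μ)⁻¹ ⟨h, φ_n*⟩`. With `h = (M - μ) g` this says that the
coefficients of `M g` are `μ_n ⟨g, φ_n*⟩`, so the series converges to `M g` for `g ∈ Dom(M)`.
Conversely, if the series converges, its partial sums are `M` applied to the partial sums of
the expansion of `g`, and closedness of `M` puts `g` in `Dom(M)`.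
-/

open Filter Topology Finset

section Biorthogonal

variable {H : Type*} [NormedAddCommGroup H] [InnerProductSpace ℂ H] {φ φs : ℕ → H}

theorem inner_sum_range_smul_of_biorthogonal
    (hbi : ∀ n m, (inner ℂ (φs n) (φ m) : ℂ) = if n = m then 1 else 0)
    (a : ℕ → ℂ) {n k : ℕ} (hnk : n < k) :
    inner ℂ (φs n) (∑ m ∈ range k, a m • φ m) = a n := by
  simp only [inner_sum, inner_smul_right, hbi, mul_ite, mul_one, mul_zero,
    sum_ite_eq, mem_range, if_pos hnk]

theorem inner_apply_of_apply_basis_eq_smul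
    (hbi : ∀ n m, (inner ℂ (φs n) (φ m) : ℂ) = if n = m then 1 else 0)
    {h : H} (hh : Tendsto (fun k => ∑ m ∈ range k, (inner ℂ (φs m) h : ℂ) • φ m) atTop (𝓝 h))
    (T : H →L[ℂ] H) (c : ℕ → ℂ) (hT : ∀ m, T (φ m) = c m • φ m) (n : ℕ) :
    inner ℂ (φs n) (T h) = c n * inner ℂ (φs n) h := by
  have hlim := ((innerSL ℂ (φs n)).comp T).continuous.tendsto h |>.comp hh
  refine tendsto_nhds_unique hlim (tendsto_const_nhds.congr' ?_)
  filter_upwards [eventually_gt_atTop n] with k hk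
  have hTsum : T (∑ m ∈ range k, (inner ℂ (φs m) h : ℂ) • φ m)
      = ∑ m ∈ range k, (c m * inner ℂ (φs m) h) • φ m := by
    simp only [map_sum, map_smul, hT, smul_smul, mul_comm]
  simp only [Function.comp_apply, ContinuousLinearMap.comp_apply, innerSL_apply_apply, hTsum,
    inner_sum_range_smul_of_biorthogonal hbi _ hk]

end Biorthogonal

section Resolvent

variable {H : Type*} [NormedAddCommGroup H] [InnerProductSpace ℂ H]
  {D : Submodule ℂ H} {M : D →ₗ[ℂ] H} {μ : ℂ} {R : H →L[ℂ] H}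

theorem resolvent_apply_eigenvector (hR : ∀ x : D, R (M x - μ • (x : H)) = x)
    {x : D} {c : ℂ} (hx : M x = c • (x : H)) : (c - μ) • R x = x := by
  rw [← map_smul, sub_smul, ← hx, hR]

theorem eigenvalue_sub_ne_zero (hR : ∀ x : D, R (M x - μ • (x : H)) = x)
    {x : D} (hx0 : (x : H) ≠ 0) {c : ℂ} (hx : M x = c • (x : H)) : c - μ ≠ 0 := by
  intro h
  exact hx0 (by rw [← resolvent_apply_eigenvector hR hx, h, zero_smul])

theorem inner_apply_eq_eigenvalue_mul
    (hR : ∀ x : D, R (M x - μ • (x : H)) = x)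
    {μs : ℕ → ℂ} {φ φs : ℕ → H} (hφD : ∀ n, φ n ∈ D) (hφ0 : ∀ n, φ n ≠ 0)
    (heig : ∀ n, M ⟨φ n, hφD n⟩ = μs n • φ n)
    (hbi : ∀ n m, (inner ℂ (φs n) (φ m) : ℂ) = if n = m then 1 else 0)
    (hbasis : ∀ g : H,
      Tendsto (fun k => ∑ n ∈ range k, (inner ℂ (φs n) g : ℂ) • φ n) atTop (𝓝 g))
    (g : D) (n : ℕ) :
    μs n * inner ℂ (φs n) (g : H) = inner ℂ (φs n) (M g) := by
  have hne m : μs m - μ ≠ 0 := eigenvalue_sub_ne_zero hR (x := ⟨φ m, hφD m⟩) (hφ0 m) (heig m)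
  have hRφ m : R (φ m) = (μs m - μ)⁻¹ • φ m := by
    rw [eq_inv_smul_iff₀ (hne m)]
    exact resolvent_apply_eigenvector hR (heig m)
  have hcoef := inner_apply_of_apply_basis_eq_smul hbi (hbasis (M g - μ • (g : H))) R _ hRφ n
  rw [hR g, inner_sub_right, inner_smul_right] at hcoef
  field_simp [hne n] at hcoef
  linear_combination hcoef

end Resolvent

theorem mem_of_tendsto_sum_eigenvalue_smul {H : Type*} [NormedAddCommGroup H]
    [InnerProductSpace ℂ H] {D : Submodule ℂ H} {M : D →ₗ[ℂ] H}
    (hclosed : ∀ (g : ℕ → D) (x y : H),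
      Tendsto (fun n => (g n : H)) atTop (𝓝 x) →
      Tendsto (fun n => M (g n)) atTop (𝓝 y) →
      ∃ hx : x ∈ D, M ⟨x, hx⟩ = y)
    {μs : ℕ → ℂ} {φ φs : ℕ → H} (hφD : ∀ n, φ n ∈ D)
    (heig : ∀ n, M ⟨φ n, hφD n⟩ = μs n • φ n) {g h : H}
    (hg : Tendsto (fun k => ∑ n ∈ range k, (inner ℂ (φs n) g : ℂ) • φ n) atTop (𝓝 g))
    (hh : Tendsto (fun k => ∑ n ∈ range k, (μs n * (inner ℂ (φs n) g : ℂ)) • φ n)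
      atTop (𝓝 h)) :
    g ∈ D := by
  let s : ℕ → D := fun k => ∑ n ∈ range k, (inner ℂ (φs n) g : ℂ) • ⟨φ n, hφD n⟩
  have hs k : (s k : H) = ∑ n ∈ range k, (inner ℂ (φs n) g : ℂ) • φ n := by
    simp only [s, Submodule.coe_sum, Submodule.coe_smul]
  have hMs k : M (s k) = ∑ n ∈ range k, (μs n * (inner ℂ (φs n) g : ℂ)) • φ n := by
    simp only [s, map_sum, map_smul, heig, smul_smul, mul_comm]
  exact (hclosed s g h (by simpa only [hs] using hg) (by simpa only [hMs] using hh)).1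

theorem stmt17_general {H : Type*} [NormedAddCommGroup H] [InnerProductSpace ℂ H]
    (D : Submodule ℂ H) (M : D →ₗ[ℂ] H)
    (hclosed : ∀ (g : ℕ → D) (x y : H),
      Tendsto (fun n => (g n : H)) atTop (𝓝 x) →
      Tendsto (fun n => M (g n)) atTop (𝓝 y) →
      ∃ hx : x ∈ D, M ⟨x, hx⟩ = y)
    (hres : ∃ (μ : ℂ) (R : H →L[ℂ] H), IsCompactOperator R ∧
      (∀ y : H, ∃ h : R y ∈ D, M ⟨R y, h⟩ - μ • R y = y) ∧
      ∀ x : D, R (M x - μ • (x : H)) = (x : H))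
    (μs : ℕ → ℂ) (φ : ℕ → H) (φs : ℕ → H)
    (hφD : ∀ n, φ n ∈ D) (hφ0 : ∀ n, φ n ≠ 0)
    (heig : ∀ n, M ⟨φ n, hφD n⟩ = μs n • φ n)
    (hbi : ∀ n m, (inner ℂ (φs n) (φ m) : ℂ) = if n = m then 1 else 0)
    (hbasis : ∀ g : H,
      Tendsto (fun k => ∑ n ∈ Finset.range k, (inner ℂ (φs n) g : ℂ) • φ n) atTop (𝓝 g)) :
    ∀ g : H,
      (g ∈ D ↔ ∃ h : H, Tendsto
        (fun k => ∑ n ∈ Finset.range k, (μs n * (inner ℂ (φs n) g : ℂ)) • φ n)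
        atTop (𝓝 h)) ∧
      ∀ hg : g ∈ D, Tendsto
        (fun k => ∑ n ∈ Finset.range k, (μs n * (inner ℂ (φs n) g : ℂ)) • φ n)
        atTop (𝓝 (M ⟨g, hg⟩)) := by
  obtain ⟨μ, R, -, -, hR⟩ := hres
  intro g
  have hM (hg : g ∈ D) : Tendsto
      (fun k => ∑ n ∈ Finset.range k, (μs n * (inner ℂ (φs n) g : ℂ)) • φ n)
      atTop (𝓝 (M ⟨g, hg⟩)) := by
    simpa only [inner_apply_eq_eigenvalue_mul hR hφD hφ0 heig hbi hbasis ⟨g, hg⟩]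
      using hbasis (M ⟨g, hg⟩)
  refine ⟨⟨fun hg => ⟨_, hM hg⟩, ?_⟩, hM⟩
  rintro ⟨h, hh⟩
  exact mem_of_tendsto_sum_eigenvalue_smul hclosed hφD heig (hbasis g) hh

/-- Lemma `diagonalisation`: let `M` be a closed operator with compact
resolvent on an infinite-dimensional Hilbert space `H` whose eigenvectors `φ_n`
(eigenvalues `μ_n`) form a conditional (Schauder) basis with biorthogonal system
`φ_n*`. Then `Dom(M)` consists exactly of those `g` for which
`Σ μ_n ⟨g,φ_n*⟩ φ_n` converges, and `M g` is its sum. -/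
theorem stmt17 {H : Type*} [NormedAddCommGroup H] [InnerProductSpace ℂ H]
    [CompleteSpace H] (hinf : ¬ FiniteDimensional ℂ H)
    (D : Submodule ℂ H) (M : D →ₗ[ℂ] H)
    (hclosed : ∀ (g : ℕ → D) (x y : H),
      Tendsto (fun n => (g n : H)) atTop (𝓝 x) →
      Tendsto (fun n => M (g n)) atTop (𝓝 y) →
      ∃ hx : x ∈ D, M ⟨x, hx⟩ = y)
    (hres : ∃ (μ : ℂ) (R : H →L[ℂ] H), IsCompactOperator R ∧
      (∀ y : H, ∃ h : R y ∈ D, M ⟨R y, h⟩ - μ • R y = y) ∧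
      ∀ x : D, R (M x - μ • (x : H)) = (x : H))
    (μs : ℕ → ℂ) (φ : ℕ → H) (φs : ℕ → H)
    (hφD : ∀ n, φ n ∈ D) (hφ0 : ∀ n, φ n ≠ 0)
    (heig : ∀ n, M ⟨φ n, hφD n⟩ = μs n • φ n)
    (hbi : ∀ n m, (inner ℂ (φs n) (φ m) : ℂ) = if n = m then 1 else 0)
    (hbasis : ∀ g : H,
      Tendsto (fun k => ∑ n ∈ Finset.range k, (inner ℂ (φs n) g : ℂ) • φ n) atTop (𝓝 g)) :
    ∀ g : H,
      (g ∈ D ↔ ∃ h : H, Tendsto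
        (fun k => ∑ n ∈ Finset.range k, (μs n * (inner ℂ (φs n) g : ℂ)) • φ n)
        atTop (𝓝 h)) ∧
      ∀ hg : g ∈ D, Tendsto
        (fun k => ∑ n ∈ Finset.range k, (μs n * (inner ℂ (φs n) g : ℂ)) • φ n)
        atTop (𝓝 (M ⟨g, hg⟩)) :=
  stmt17_general D M hclosed hres μs φ φs hφD hφ0 heig hbi hbasis
end
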